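/- For every odd prime r with r ≠ 5 there exists a finite group P whose cardinality is a power of r, whose nilpotency class is exactly two, together with an injective group homomorphism φ from the symmetric group Equiv.Perm (Fin 5) into the automorphism group of P, such that some element s of Equiv.Perm (Fin 5) of order 5 acts fixed point freely on P, i.e. for every x ∈ P, if φ(s)(x) = x then x = 1. -/

import Mathlib

/-!
Let `A` be the sum-zero vectors in `(ZMod r)⁵`, the four-dimensional deleted permutation module
of `Sym(5)`. The map `β(a, b)ᵢ = 5 aᵢ bᵢ - ∑ⱼ aⱼ bⱼ` is a `Sym(5)`-equivariant biadditive map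
`A → A → A`, so `Sym(5)` acts on the Heisenberg-type group `A × A × A` with product
`(a, b, c)(a', b', c') = (a + a', b + b', c + c' + β(a, b'))`. This is an `r`-group, its
commutators lie in the central factor `0 × 0 × A`, and it is not abelian because `β ≠ 0` once
`5 ≠ 0` in `ZMod r`, so its class is two. The action is faithful already on `A`, and a `5`-cycle
fixes only constant vectors of `A`, which vanish because `5 c = 0` forces `c = 0`.
-/

@[ext]
structure Heisenberg {M N W : Type*} [AddCommGroup M] [AddCommGroup N] [AddCommGroup W]
    (β : M →+ N →+ W) where
  a : M
  b : N
  c : W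

namespace Heisenberg

variable {M N W : Type*} [AddCommGroup M] [AddCommGroup N] [AddCommGroup W] {β : M →+ N →+ W}

instance : Mul (Heisenberg β) := ⟨fun x y => ⟨x.a + y.a, x.b + y.b, x.c + y.c + β x.a y.b⟩⟩
instance : One (Heisenberg β) := ⟨⟨0, 0, 0⟩⟩
instance : Inv (Heisenberg β) := ⟨fun x => ⟨-x.a, -x.b, -x.c + β x.a x.b⟩⟩

@[simp] lemma mul_a (x y : Heisenberg β) : (x * y).a = x.a + y.a := rfl
@[simp] lemma mul_b (x y : Heisenberg β) : (x * y).b = x.b + y.b := rfl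
@[simp] lemma mul_c (x y : Heisenberg β) : (x * y).c = x.c + y.c + β x.a y.b := rfl
@[simp] lemma one_a : (1 : Heisenberg β).a = 0 := rfl
@[simp] lemma one_b : (1 : Heisenberg β).b = 0 := rfl
@[simp] lemma one_c : (1 : Heisenberg β).c = 0 := rfl
@[simp] lemma inv_a (x : Heisenberg β) : x⁻¹.a = -x.a := rfl
@[simp] lemma inv_b (x : Heisenberg β) : x⁻¹.b = -x.b := rfl
@[simp] lemma inv_c (x : Heisenberg β) : x⁻¹.c = -x.c + β x.a x.b := rfl

instance : Group (Heisenberg β) where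
  mul_assoc x y z := by
    ext <;> simp only [mul_a, mul_b, mul_c, map_add, AddMonoidHom.add_apply] <;> abel
  one_mul x := by ext <;> simp
  mul_one x := by ext <;> simp
  inv_mul_cancel x := by ext <;> simp

def equivProd : Heisenberg β ≃ M × N × W where
  toFun x := (x.a, x.b, x.c)
  invFun p := ⟨p.1, p.2.1, p.2.2⟩

instance [Finite M] [Finite N] [Finite W] : Finite (Heisenberg β) :=
  Finite.of_equiv _ equivProd.symm

lemma card_eq : Nat.card (Heisenberg β) = Nat.card M * (Nat.card N * Nat.card W) := by
  rw [Nat.card_congr equivProd, Nat.card_prod, Nat.card_prod]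

variable (β) in
def toProd : Heisenberg β →* Multiplicative (M × N) where
  toFun x := .ofAdd (x.a, x.b)
  map_one' := rfl
  map_mul' _ _ := rfl

lemma ker_toProd_le_center : (toProd β).ker ≤ Subgroup.center (Heisenberg β) := by
  intro x hx
  obtain ⟨ha, hb⟩ : x.a = 0 ∧ x.b = 0 := by simpa [toProd, Prod.ext_iff] using hx
  refine Subgroup.mem_center_iff.mpr fun y => ?_
  ext <;> simp [ha, hb, add_comm]

instance : Group.IsNilpotent (Heisenberg β) :=
  Subgroup.isNilpotent_of_ker_le_center _ ker_toProd_le_center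

lemma not_isMulCommutative (hβ : β ≠ 0) : ¬ IsMulCommutative (Heisenberg β) := by
  obtain ⟨a, ha⟩ := DFunLike.ne_iff.mp hβ
  obtain ⟨b, hab⟩ := DFunLike.ne_iff.mp ha
  intro ⟨⟨hcomm⟩⟩
  have := congrArg Heisenberg.c (hcomm ⟨a, 0, 0⟩ ⟨0, b, 0⟩)
  simp only [mul_c, map_zero, add_zero, zero_add] at this
  exact hab this

theorem nilpotencyClass_eq_two (hβ : β ≠ 0) : Group.nilpotencyClass (Heisenberg β) = 2 := by
  refine le_antisymm ?_ ?_
  · have h := Group.nilpotencyClass_le_of_ker_le_center _ (ker_toProd_le_center (β := β))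
    have h1 := CommGroup.nilpotencyClass_le_one (G := Multiplicative (M × N))
    omega
  · by_contra! h
    exact not_isMulCommutative hβ
      (Group.IsNilpotent.nilpotencyClass_le_one_iff.mp (Nat.lt_succ_iff.mp h))

section Action

variable {G : Type*} [Group G] [DistribMulAction G M] [DistribMulAction G N] [DistribMulAction G W]

def mulAut (hβ : ∀ (g : G) a b, β (g • a) (g • b) = g • β a b) :
    G →* MulAut (Heisenberg β) where
  toFun g :=
    { toFun x := ⟨g • x.a, g • x.b, g • x.c⟩
      invFun x := ⟨g⁻¹ • x.a, g⁻¹ • x.b, g⁻¹ • x.c⟩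
      left_inv x := by simp
      right_inv x := by simp
      map_mul' x y := by ext <;> simp [hβ] }
  map_one' := by ext <;> simp
  map_mul' g h := by ext <;> simp [mul_smul]

variable {hβ : ∀ (g : G) a b, β (g • a) (g • b) = g • β a b}

@[simp] lemma mulAut_apply (g : G) (x : Heisenberg β) :
    mulAut hβ g x = ⟨g • x.a, g • x.b, g • x.c⟩ := rfl

lemma mulAut_injective [FaithfulSMul G M] : Function.Injective (mulAut hβ) := by
  intro g h hgh
  refine eq_of_smul_eq_smul fun m : M => ?_
  simpa using congrArg Heisenberg.a (DFunLike.congr_fun hgh ⟨m, 0, 0⟩)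

lemma eq_one_of_mulAut_apply_eq {g : G} (hM : ∀ a : M, g • a = a → a = 0)
    (hN : ∀ b : N, g • b = b → b = 0) (hW : ∀ c : W, g • c = c → c = 0)
    {x : Heisenberg β} (hx : mulAut hβ g x = x) : x = 1 := by
  rw [mulAut_apply, Heisenberg.ext_iff] at hx
  ext
  exacts [hM _ hx.1, hN _ hx.2.1, hW _ hx.2.2]

end Action

end Heisenberg

variable (R ι : Type*) [Fintype ι]

def sumZero [AddCommGroup R] : AddSubgroup (ι → R) where
  carrier := {a | ∑ i, a i = 0}
  add_mem' {a b} ha hb := by simp_all [Finset.sum_add_distrib]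
  zero_mem' := by simp
  neg_mem' {a} ha := by simp_all

namespace sumZero

open Finset

variable {R ι}

section AddCommGroup

variable [AddCommGroup R]

lemma mem_iff {a : ι → R} : a ∈ sumZero R ι ↔ ∑ i, a i = 0 := Iff.rfl

instance : SMul (Equiv.Perm ι) (sumZero R ι) :=
  ⟨fun σ a => ⟨fun i => (a : ι → R) (σ⁻¹ i), by
    rw [mem_iff, Equiv.sum_comp σ⁻¹ (a : ι → R)]; exact a.2⟩⟩

@[simp] lemma smul_apply (σ : Equiv.Perm ι) (a : sumZero R ι) (i : ι) :
    ((σ • a : sumZero R ι) : ι → R) i = (a : ι → R) (σ⁻¹ i) := rfl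

instance : DistribMulAction (Equiv.Perm ι) (sumZero R ι) where
  one_smul a := by ext; simp
  mul_smul σ τ a := by ext; simp [Equiv.Perm.mul_apply]
  smul_zero σ := by ext; simp
  smul_add σ a b := by ext; simp

variable [DecidableEq ι]

def singleSubSingle (i j : ι) (x : R) : sumZero R ι :=
  ⟨Pi.single i x - Pi.single j x, by simp [mem_iff, sum_sub_distrib]⟩

@[simp] lemma singleSubSingle_apply (i j : ι) (x : R) (k : ι) :
    (singleSubSingle i j x : ι → R) k =
      (Pi.single i x : ι → R) k - (Pi.single j x : ι → R) k :=
  rfl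

lemma faithfulSMul [Nontrivial R] (hι : 2 < Fintype.card ι) :
    FaithfulSMul (Equiv.Perm ι) (sumZero R ι) := by
  refine ⟨fun {σ τ} h => Equiv.ext fun i => by_contra fun hne => ?_⟩
  obtain ⟨x, hx⟩ := exists_ne (0 : R)
  obtain ⟨k, hki, hkj⟩ : ∃ k, k ≠ i ∧ k ≠ τ.symm (σ i) := by
    have : #({i, τ.symm (σ i)} : Finset ι) < #(univ : Finset ι) :=
      (card_le_two).trans_lt hι
    obtain ⟨k, -, hk⟩ := exists_mem_notMem_of_card_lt_card this
    exact ⟨k, by simpa [not_or] using hk⟩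
  have hi : τ.symm (σ i) ≠ i := fun h' => hne (τ.symm_apply_eq.mp h')
  have := congrArg (fun a : sumZero R ι => (a : ι → R) (σ i)) (h (singleSubSingle i k x))
  exact hx (by simpa [hki.symm, hi, hkj.symm] using this)

lemma apply_eq_of_smul_eq {σ : Equiv.Perm ι} (hσ : σ.IsCycle) (hsupp : σ.support = univ)
    {a : sumZero R ι} (ha : σ • a = a) (i j : ι) :
    (a : ι → R) i = (a : ι → R) j := by
  obtain ⟨k, hk⟩ := hσ.exists_pow_eq (Equiv.Perm.mem_support.mp (hsupp ▸ mem_univ j))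
    (Equiv.Perm.mem_support.mp (hsupp ▸ mem_univ i))
  have hstab : σ ^ k ∈ MulAction.stabilizer (Equiv.Perm ι) a :=
    Subgroup.pow_mem _ (MulAction.mem_stabilizer_iff.mpr ha) k
  conv_lhs => rw [← MulAction.mem_stabilizer_iff.mp hstab, smul_apply, ← hk]
  simp

end AddCommGroup

section Ring

variable [Ring R]

lemma eq_zero_of_smul_eq [NoZeroDivisors R] [DecidableEq ι]
    (hι : (Fintype.card ι : R) ≠ 0) {σ : Equiv.Perm ι} (hσ : σ.IsCycle)
    (hsupp : σ.support = univ) {a : sumZero R ι} (ha : σ • a = a) : a = 0 := by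
  ext i
  have hsum := mem_iff.mp a.2
  simp_rw [apply_eq_of_smul_eq hσ hsupp ha _ i, sum_const, card_univ, nsmul_eq_mul] at hsum
  exact (mul_eq_zero.mp hsum).resolve_left hι

/-- The pointwise product projected back to `sumZero`, scaled by `n = card ι` so that no division
by `n` is needed. -/
def mul : sumZero R ι →+ sumZero R ι →+ sumZero R ι :=
  AddMonoidHom.mk' (fun a => AddMonoidHom.mk' (fun b =>
    ⟨fun i => Fintype.card ι • ((a : ι → R) i * (b : ι → R) i) -
        ∑ j, (a : ι → R) j * (b : ι → R) j,
      by simp [mem_iff, sum_sub_distrib, ← mul_sum]⟩)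
    fun b b' => by
      ext
      simp only [AddSubgroup.coe_add, Pi.add_apply, mul_add, smul_add, sum_add_distrib,
        AddMemClass.mk_add_mk]
      abel)
    fun a a' => by
      ext
      simp only [AddSubgroup.coe_add, Pi.add_apply, add_mul, smul_add, sum_add_distrib,
        AddMonoidHom.mk'_apply, AddMonoidHom.add_apply, AddMemClass.mk_add_mk]
      abel

@[simp] lemma mul_apply (a b : sumZero R ι) (i : ι) :
    (mul a b : ι → R) i =
      Fintype.card ι • ((a : ι → R) i * (b : ι → R) i) -
        ∑ j, (a : ι → R) j * (b : ι → R) j :=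
  rfl

lemma mul_smul_smul (σ : Equiv.Perm ι) (a b : sumZero R ι) :
    mul (σ • a) (σ • b) = σ • mul a b := by
  ext i
  simp [Equiv.sum_comp σ.symm fun j => (a : ι → R) j * (b : ι → R) j]

lemma mul_apply_sub_mul_apply (a b : sumZero R ι) (i k : ι) :
    (mul a b : ι → R) i - (mul a b : ι → R) k =
      Fintype.card ι •
        ((a : ι → R) i * (b : ι → R) i - (a : ι → R) k * (b : ι → R) k) := by
  rw [mul_apply, mul_apply, smul_sub]
  abel

lemma mul_ne_zero [DecidableEq ι] (hι : 2 < Fintype.card ι) (hn : (Fintype.card ι : R) ≠ 0) :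
    (mul : sumZero R ι →+ sumZero R ι →+ sumZero R ι) ≠ 0 := by
  obtain ⟨i, j, k, hij, hik, hjk⟩ := Fintype.two_lt_card_iff.mp hι
  intro h
  have := mul_apply_sub_mul_apply (singleSubSingle i j (1 : R)) (singleSubSingle i j 1) i k
  exact hn (by simpa [h, Pi.single_apply, hij, hik.symm, hjk.symm] using this.symm)

end Ring

end sumZero

lemma ZMod.natCast_prime_ne_zero {p q : ℕ} (hp : p.Prime) (hq : q.Prime) (hpq : p ≠ q) :
    (q : ZMod p) ≠ 0 := by
  rw [Ne, ZMod.natCast_eq_zero_iff]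
  exact fun h => hpq ((Nat.prime_dvd_prime_iff_eq hp hq).mp h)

theorem exists_class_two_r_group_with_sym5_action
    (r : ℕ) (hr : r.Prime) (hr5 : r ≠ 5) :
    ∃ (P : Type) (_ : Group P) (_ : Finite P) (_ : Group.IsNilpotent P),
      (∃ k : ℕ, Nat.card P = r ^ k) ∧
      Group.nilpotencyClass P = 2 ∧
      ∃ φ : Equiv.Perm (Fin 5) →* MulAut P, Function.Injective φ ∧
        ∃ s : Equiv.Perm (Fin 5), orderOf s = 5 ∧ ∀ x : P, φ s x = x → x = 1 := by
  have : Fact r.Prime := ⟨hr⟩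
  have h5 : (Fintype.card (Fin 5) : ZMod r) ≠ 0 := by
    simpa using ZMod.natCast_prime_ne_zero hr Nat.prime_five hr5
  have h3 : 2 < Fintype.card (Fin 5) := by simp
  have := sumZero.faithfulSMul (R := ZMod r) h3
  have hdvd : Nat.card (sumZero (ZMod r) (Fin 5)) ∣ r ^ 5 := by
    simpa using AddSubgroup.card_addSubgroup_dvd_card (sumZero (ZMod r) (Fin 5))
  obtain ⟨k, -, hk⟩ := (Nat.dvd_prime_pow hr).mp hdvd
  refine ⟨Heisenberg (sumZero.mul (R := ZMod r) (ι := Fin 5)), inferInstance, inferInstance,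
    inferInstance, ⟨k + (k + k), by rw [Heisenberg.card_eq, hk, pow_add, pow_add]⟩,
    Heisenberg.nilpotencyClass_eq_two (sumZero.mul_ne_zero h3 h5),
    Heisenberg.mulAut sumZero.mul_smul_smul, Heisenberg.mulAut_injective, finRotate 5,
    by rw [isCycle_finRotate.orderOf, support_finRotate]; rfl, fun x => ?_⟩
  have hfix : ∀ a : sumZero (ZMod r) (Fin 5), finRotate 5 • a = a → a = 0 :=
    fun a => sumZero.eq_zero_of_smul_eq h5 isCycle_finRotate support_finRotate
  exact Heisenberg.eq_one_of_mulAut_apply_eq hfix hfix hfix
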